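/- Lemma 3 (uncorrupted-step contraction): Let B\S index uncorrupted equations in the q-quantile with |B\S| ≥ (q-β)m, rows of A unit-norm, and ⟨a_i, x⟩ = b_i for i ∈ B\S. Then the average over i ∈ B\S of ‖x_{k+1} - x‖² (with the Kaczmarz update for equation i) is at most (1 - σ_{q-β,min}(A)²/(qm)) · ‖x_k - x‖². -/

import Mathlib

open RealInnerProductSpace Finset

/-- `σ_{r,min}`: the minimum over all row-subsets of cardinality `k` of the smallest
singular value of the corresponding row-submatrix. -/
noncomputable def sigmaRMin {m n : ℕ} (a : Fin m → EuclideanSpace ℝ (Fin n))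
    (k : ℕ) : ℝ :=
  sInf {t : ℝ | ∃ S : Finset (Fin m), S.card = k ∧
    ∃ y : EuclideanSpace ℝ (Fin n), ‖y‖ = 1 ∧
      t = Real.sqrt (∑ i ∈ S, ⟪a i, y⟫ ^ 2)}

/-!
The Kaczmarz step for a unit row `a` projects the iterate orthogonally onto the hyperplane
`⟪a, ·⟫ = b`, which contains the solution `x`; by Pythagoras it removes exactly the component
`⟪a, xk - x⟫ ^ 2` from the squared error. Averaging over `T`, the removed mass is
`(1 / |T|) ∑ ⟪a i, xk - x⟫ ^ 2`. The sum is at least `σ² ‖xk - x‖²`, because `T` contains a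
subset of the cardinality over which `σ = σ_{q-β,min}` is the minimal singular value, and
`|T| ≤ q m`.
-/

section Kaczmarz

variable {E : Type*} [NormedAddCommGroup E] [InnerProductSpace ℝ E]

theorem norm_kaczmarz_step_sub_sq {a x y : E} {b : ℝ} (ha : ‖a‖ = 1) (hb : ⟪a, x⟫ = b) :
    ‖y + (b - ⟪a, y⟫) • a - x‖ ^ 2 = ‖y - x‖ ^ 2 - ⟪a, y - x⟫ ^ 2 := by
  have hstep : y + (b - ⟪a, y⟫) • a - x = (y - x) - ⟪a, y - x⟫ • a := by
    rw [inner_sub_right, hb, sub_smul, sub_smul]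
    abel
  rw [hstep, norm_sub_sq_real, real_inner_smul_right, real_inner_comm, norm_smul, ha,
    mul_one, Real.norm_eq_abs, sq_abs]
  ring

theorem average_norm_kaczmarz_step_sub_sq {ι : Type*} (a : ι → E) (b : ι → ℝ) (x y : E)
    {T : Finset ι} (hT : T.Nonempty) (ha : ∀ i ∈ T, ‖a i‖ = 1)
    (hb : ∀ i ∈ T, ⟪a i, x⟫ = b i) :
    (1 / #T : ℝ) * ∑ i ∈ T, ‖y + (b i - ⟪a i, y⟫) • a i - x‖ ^ 2 =
      ‖y - x‖ ^ 2 - (1 / #T : ℝ) * ∑ i ∈ T, ⟪a i, y - x⟫ ^ 2 := by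
  have hcard : (#T : ℝ) ≠ 0 := by exact_mod_cast hT.card_pos.ne'
  rw [sum_congr rfl fun i hi => norm_kaczmarz_step_sub_sq (ha i hi) (hb i hi),
    sum_sub_distrib, sum_const, nsmul_eq_mul]
  field_simp

end Kaczmarz

section SigmaRMin

variable {m n : ℕ} (a : Fin m → EuclideanSpace ℝ (Fin n))

theorem sigmaRMin_nonneg (k : ℕ) : 0 ≤ sigmaRMin a k :=
  Real.sInf_nonneg fun _ ⟨_, _, _, _, ht⟩ => ht ▸ Real.sqrt_nonneg _

theorem sigmaRMin_le_sqrt_sum {k : ℕ} {S : Finset (Fin m)} (hS : #S = k)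
    {y : EuclideanSpace ℝ (Fin n)} (hy : ‖y‖ = 1) :
    sigmaRMin a k ≤ √(∑ i ∈ S, ⟪a i, y⟫ ^ 2) :=
  csInf_le ⟨0, fun _ ⟨_, _, _, _, ht⟩ => ht ▸ Real.sqrt_nonneg _⟩ ⟨S, hS, y, hy, rfl⟩

theorem sigmaRMin_sq_mul_norm_sq_le_sum {k : ℕ} {T : Finset (Fin m)} (hk : k ≤ #T)
    (y : EuclideanSpace ℝ (Fin n)) :
    sigmaRMin a k ^ 2 * ‖y‖ ^ 2 ≤ ∑ i ∈ T, ⟪a i, y⟫ ^ 2 := by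
  rcases eq_or_ne y 0 with rfl | hy
  · simp
  obtain ⟨S, hST, hS⟩ := exists_subset_card_eq hk
  have hy' : ‖y‖ ≠ 0 := norm_ne_zero_iff.2 hy
  have hunit : ‖‖y‖⁻¹ • y‖ = 1 := by
    rw [norm_smul, norm_inv, norm_norm, inv_mul_cancel₀ hy']
  have hscale :
      ∑ i ∈ S, ⟪a i, ‖y‖⁻¹ • y⟫ ^ 2 = (∑ i ∈ S, ⟪a i, y⟫ ^ 2) / ‖y‖ ^ 2 := by
    simp only [real_inner_smul_right, mul_pow, ← sum_mul, inv_pow, div_eq_mul_inv, mul_comm]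
  have hS_bound : sigmaRMin a k ^ 2 ≤ (∑ i ∈ S, ⟪a i, y⟫ ^ 2) / ‖y‖ ^ 2 := by
    rw [← hscale, ← Real.sq_sqrt (sum_nonneg fun i _ => sq_nonneg _)]
    exact pow_le_pow_left₀ (sigmaRMin_nonneg a k) (sigmaRMin_le_sqrt_sum a hS hunit) 2
  calc sigmaRMin a k ^ 2 * ‖y‖ ^ 2 ≤ ∑ i ∈ S, ⟪a i, y⟫ ^ 2 :=
        (le_div_iff₀ (by positivity)).1 hS_bound
    _ ≤ ∑ i ∈ T, ⟪a i, y⟫ ^ 2 :=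
        sum_le_sum_of_subset_of_nonneg hST fun i _ _ => sq_nonneg _

end SigmaRMin

theorem uncorrupted_step_contraction_general {m n : ℕ} (a : Fin m → EuclideanSpace ℝ (Fin n))
    (x xk : EuclideanSpace ℝ (Fin n)) (b : Fin m → ℝ) (q β : ℝ)
    (T : Finset (Fin m))
    (ha : ∀ i, ‖a i‖ = 1)
    (hcons : ∀ i ∈ T, ⟪a i, x⟫ = b i)
    (hTlow : (q - β) * m ≤ (T.card : ℝ))
    (hThigh : (T.card : ℝ) ≤ q * m) :
    (1 / T.card : ℝ) * ∑ i ∈ T, ‖xk + (b i - ⟪a i, xk⟫) • a i - x‖ ^ 2 ≤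
      (1 - sigmaRMin a ⌈(q - β) * m⌉₊ ^ 2 / (q * m)) * ‖xk - x‖ ^ 2 := by
  set σ := sigmaRMin a ⌈(q - β) * m⌉₊
  have hσ := sigmaRMin_sq_mul_norm_sq_le_sum a (Nat.ceil_le.2 hTlow) (xk - x)
  rw [show (1 - σ ^ 2 / (q * m)) * ‖xk - x‖ ^ 2 =
    ‖xk - x‖ ^ 2 - σ ^ 2 * ‖xk - x‖ ^ 2 / (q * m) by ring]
  rcases T.eq_empty_or_nonempty with rfl | hT
  · have hzero : σ ^ 2 * ‖xk - x‖ ^ 2 = 0 :=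
      le_antisymm (by simpa using hσ) (by positivity)
    simp [hzero]
  have hcard : (0 : ℝ) < #T := by exact_mod_cast hT.card_pos
  rw [average_norm_kaczmarz_step_sub_sq a b x xk hT (fun i _ => ha i) hcons]
  gcongr
  calc σ ^ 2 * ‖xk - x‖ ^ 2 / (q * m) ≤ (∑ i ∈ T, ⟪a i, xk - x⟫ ^ 2) / (q * m) := by
        gcongr; linarith
    _ ≤ (∑ i ∈ T, ⟪a i, xk - x⟫ ^ 2) / #T :=
        div_le_div_of_nonneg_left (sum_nonneg fun i _ => sq_nonneg _) hcard hThigh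
    _ = 1 / #T * ∑ i ∈ T, ⟪a i, xk - x⟫ ^ 2 := by ring

/-- Lemma 3: contraction when averaging over the uncorrupted
equations `T = B \ S` in the `q`-quantile. -/
theorem uncorrupted_step_contraction {m n : ℕ} (a : Fin m → EuclideanSpace ℝ (Fin n))
    (x xk : EuclideanSpace ℝ (Fin n)) (b : Fin m → ℝ) (q β : ℝ)
    (T : Finset (Fin m))
    (hm : 0 < m)
    (ha : ∀ i, ‖a i‖ = 1)
    (hβ : 0 < β) (hβq : β < q) (hq1 : q ≤ 1)
    (hcons : ∀ i ∈ T, ⟪a i, x⟫ = b i)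
    (hTlow : (q - β) * m ≤ (T.card : ℝ))
    (hThigh : (T.card : ℝ) ≤ q * m) :
    (1 / T.card : ℝ) * ∑ i ∈ T, ‖xk + (b i - ⟪a i, xk⟫) • a i - x‖ ^ 2 ≤
      (1 - sigmaRMin a ⌈(q - β) * m⌉₊ ^ 2 / (q * m)) * ‖xk - x‖ ^ 2 :=
  uncorrupted_step_contraction_general a x xk b q β T ha hcons hTlow hThigh
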